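/- arXiv:1610.09469 — 10 statements merged into one kernel-verified Lean document; each statement's English description precedes it below -/
import Mathlib

section
/- Let 1 → N → G → Q → 1 be a short exact sequence of groups, and let S be a generating subset of G (hence, via the projection, of Q). If x ∈ N has word length n ≥ 1 with respect to S and x is not in the normal closure in G of the set of elements of N of word length at most n−1, then any word w in the free group F_S of length n representing x lies in the kernel N_Q of F_S → Q but does not lie in the normal closure in F_S of the elements of N_Q of length at most n−1. -/
def wordLen {S : Type*} [DecidableEq S] (w : FreeGroup S) : ℕ := w.toWord.length

theorem relation_lift_not_generated {G Q : Type*} [Group G] [Group Q]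
    (S : Set G) [DecidableEq S]
    (hgen : Subgroup.closure S = ⊤)
    (π : FreeGroup S →* G) (hπ : π = FreeGroup.lift (fun s : S => (s : G)))
    (p : G →* Q) (hp : Function.Surjective p)
    (N : Subgroup G) (hN : N = p.ker)
    (x : G) (n : ℕ) (hn : 1 ≤ n)
    (hxN : x ∈ N)
    -- `x` has word length `n` with respect to `S`
    (hxlen : ∃ w : FreeGroup S, π w = x ∧ wordLen w = n)
    (hxmin : ∀ w : FreeGroup S, π w = x → n ≤ wordLen w)
    -- `x` is not in the normal closure in `G` of elements of `N` of length at most `n-1`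
    (hx : x ∉ Subgroup.normalClosure
      {y : G | y ∈ N ∧ ∃ w : FreeGroup S, π w = y ∧ wordLen w ≤ n - 1}) :
    ∀ w : FreeGroup S, π w = x → wordLen w = n →
      w ∈ (p.comp π).ker ∧
        w ∉ Subgroup.normalClosure
          {v : FreeGroup S | v ∈ (p.comp π).ker ∧ wordLen v ≤ n - 1} := by
  intro w hw hwl
  have hπsurj : Function.Surjective π := by
    rw [← MonoidHom.range_eq_top, hπ, FreeGroup.range_lift_eq_closure,
      Subtype.range_coe, hgen]
  constructor
  · show p (π w) = 1
    rw [hw]; rw [hN] at hxN; exact hxN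
  · intro hmem
    apply hx
    have : π w ∈ Subgroup.map π (Subgroup.normalClosure
        {v : FreeGroup S | v ∈ (p.comp π).ker ∧ wordLen v ≤ n - 1}) :=
      ⟨w, hmem, rfl⟩
    rw [Subgroup.map_normalClosure _ _ hπsurj] at this
    rw [← hw]
    refine Subgroup.normalClosure_mono ?_ this
    rintro y ⟨v, ⟨hv1, hv2⟩, rfl⟩
    exact ⟨by rw [hN]; exact hv1, v, rfl, hv2⟩
end

section
/- Let 1 → N → G → Q → 1 be a short exact sequence of groups and S a generating set of G. Suppose the kernel N_G of F_S → G is normally generated by its elements of length at most r. If n ≥ r+1 and w ∈ F_S is a word of length n in the kernel N_Q of F_S → Q that is not in the normal closure in F_S of elements of N_Q of length at most n−1, then the element x of N represented by w has the property that x is not in the normal closure in G of the elements of N of word length (with respect to S) at most n−1. -/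
theorem element_not_in_normalClosure_of_word {G Q : Type*} [Group G] [Group Q]
    (S : Set G) [DecidableEq S]
    (hgen : Subgroup.closure S = ⊤)
    (π : FreeGroup S →* G) (hπ : π = FreeGroup.lift (fun s : S => (s : G)))
    (p : G →* Q) (hp : Function.Surjective p)
    (N : Subgroup G) (hN : N = p.ker)
    (r : ℕ)
    -- the kernel of `F_S → G` is normally generated by its elements of length at most `r`
    (hr : π.ker = Subgroup.normalClosure {v : FreeGroup S | v ∈ π.ker ∧ wordLen v ≤ r})
    (n : ℕ) (hn : r + 1 ≤ n)
    (w : FreeGroup S) (hwlen : wordLen w = n)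
    (hwQ : w ∈ (p.comp π).ker)
    (hw : w ∉ Subgroup.normalClosure
      {v : FreeGroup S | v ∈ (p.comp π).ker ∧ wordLen v ≤ n - 1}) :
    π w ∉ Subgroup.normalClosure
      {y : G | y ∈ N ∧ ∃ v : FreeGroup S, π v = y ∧ wordLen v ≤ n - 1} := by
  intro hmem
  apply hw
  set K := Subgroup.normalClosure
      {v : FreeGroup S | v ∈ (p.comp π).ker ∧ wordLen v ≤ n - 1} with hK
  have hsurj : Function.Surjective π := by
    rw [← MonoidHom.range_eq_top, hπ, FreeGroup.range_lift_eq_closure]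
    simpa using hgen
  have hkerle : π.ker ≤ K := by
    rw [hr]
    apply Subgroup.normalClosure_le_normal
    intro v hv
    apply Subgroup.subset_normalClosure
    refine ⟨?_, le_trans hv.2 (by omega)⟩
    have h1 : π v = 1 := hv.1
    simp [MonoidHom.mem_ker, h1]
  have hmap : Subgroup.normalClosure
      {y : G | y ∈ N ∧ ∃ v : FreeGroup S, π v = y ∧ wordLen v ≤ n - 1} ≤ K.map π := by
    have : (K.map π).Normal := Subgroup.Normal.map inferInstance π hsurj
    apply Subgroup.normalClosure_le_normal
    rintro y ⟨hyN, v, hv, hlen⟩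
    have hpy : p y = 1 := by rw [hN] at hyN; exact hyN
    refine ⟨v, Subgroup.subset_normalClosure ⟨?_, hlen⟩, hv⟩
    simp [MonoidHom.mem_ker, hv, hpy]
  obtain ⟨u, hu, huw⟩ := hmap hmem
  have h1 : w * u⁻¹ ∈ π.ker := by simp [MonoidHom.mem_ker, huw]
  have h2 : w * u⁻¹ ∈ K := hkerle h1
  simpa using mul_mem h2 hu
end

section
/- Let G be a group with finite-index normal subgroup H, coset representatives x_1,…,x_r, and surjective homomorphisms φ_i : H → G (i = 1,…,r) such that for all i,j there is k with φ_i ∘ (conjugation by x_j) = φ_k. Define K_0 = 1 and K_{n+1} = ⋂_{i=1}^r φ_i^{-1}(K_n). Then each K_n is a normal subgroup of G contained in H. -/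
/-!
Write `L = ⋂ᵢ φᵢ⁻¹(K)` for a normal subgroup `K` of `G`. Conjugating by `h ∈ H` preserves `L`,
because each `φᵢ` is a homomorphism and `K` is normal; conjugating by a representative `x_j`
preserves `L`, because by condition (2) it only permutes the maps `φᵢ`. Since every element of `G`
is some `x_j h`, the subgroup `L` is normal, and induction on `n` gives the theorem.
-/

namespace Subgroup

variable {G ι : Type*} [Group G] {H : Subgroup G}

def commonPreimage (φ : ι → H →* G) (K : Subgroup G) : Subgroup G :=
  ⨅ i, (K.comap (φ i)).map H.subtype

variable {φ : ι → H →* G} {K : Subgroup G}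

theorem commonPreimage_le [Nonempty ι] : commonPreimage φ K ≤ H :=
  (iInf_le _ (Classical.arbitrary ι)).trans (map_subtype_le _)

theorem mem_commonPreimage_iff {g : G} (hg : g ∈ H) :
    g ∈ commonPreimage φ K ↔ ∀ i, φ i ⟨g, hg⟩ ∈ K := by
  simp only [commonPreimage, mem_iInf, mem_map, mem_comap, H.coe_subtype]
  refine forall_congr' fun i => ⟨?_, fun h => ⟨⟨g, hg⟩, h, rfl⟩⟩
  rintro ⟨y, hy, rfl⟩
  exact hy

theorem conj_mem_commonPreimage [K.Normal] {h k : G} (hh : h ∈ H) (hk : k ∈ H)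
    (hkL : k ∈ commonPreimage φ K) : h * k * h⁻¹ ∈ commonPreimage φ K := by
  have hconj : h * k * h⁻¹ ∈ H := H.mul_mem (H.mul_mem hh hk) (H.inv_mem hh)
  rw [mem_commonPreimage_iff hk] at hkL
  rw [mem_commonPreimage_iff hconj]
  intro i
  have hsplit : (⟨h * k * h⁻¹, hconj⟩ : H) = ⟨h, hh⟩ * ⟨k, hk⟩ * (⟨h, hh⟩ : H)⁻¹ := rfl
  rw [hsplit, map_mul, map_mul, map_inv]
  exact ‹K.Normal›.conj_mem _ (hkL i) _

theorem conj_mem_commonPreimage_of_comp_conj (hN : H.Normal) {y k : G}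
    (hy : ∀ i, ∃ j, ∀ (h : G) (hh : h ∈ H),
      φ i ⟨y * h * y⁻¹, hN.conj_mem h hh y⟩ = φ j ⟨h, hh⟩)
    (hk : k ∈ H) (hkL : k ∈ commonPreimage φ K) : y * k * y⁻¹ ∈ commonPreimage φ K := by
  rw [mem_commonPreimage_iff hk] at hkL
  rw [mem_commonPreimage_iff (hN.conj_mem k hk y)]
  intro i
  obtain ⟨j, hj⟩ := hy i
  rw [hj k hk]
  exact hkL j

theorem commonPreimage_normal [Nonempty ι] {κ : Type*} (hN : H.Normal) [K.Normal] (x : κ → G)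
    (hcover : ∀ g : G, ∃ (j : κ) (h : G), h ∈ H ∧ g = x j * h)
    (hconj : ∀ (i : ι) (j : κ), ∃ k : ι, ∀ (h : G) (hh : h ∈ H),
      φ i ⟨x j * h * (x j)⁻¹, hN.conj_mem h hh (x j)⟩ = φ k ⟨h, hh⟩) :
    (commonPreimage φ K).Normal := by
  refine ⟨fun k hkL g => ?_⟩
  have hk : k ∈ H := commonPreimage_le hkL
  obtain ⟨j, h, hh, rfl⟩ := hcover g
  have hassoc : x j * h * k * (x j * h)⁻¹ = x j * (h * k * h⁻¹) * (x j)⁻¹ := by group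
  rw [hassoc]
  exact conj_mem_commonPreimage_of_comp_conj hN (hconj · j)
    (H.mul_mem (H.mul_mem hh hk) (H.inv_mem hh)) (conj_mem_commonPreimage hh hk hkL)

end Subgroup

open Subgroup in
theorem iterated_endomorphisms_K_normal_general {G : Type*} [Group G]
    (H : Subgroup G) (hN : H.Normal) (r : ℕ) (x : Fin r → G)
    -- the `x i` are coset representatives: `G = x 1 H ∪ ... ∪ x r H`
    (hcover : ∀ g : G, ∃ (i : Fin r) (h : G), h ∈ H ∧ g = x i * h)
    (φ : Fin r → (H →* G))
    -- condition (2): for all `i, j` there is `k` with `φ i ∘ μ_{x j} = φ k`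
    (hconj : ∀ i j : Fin r, ∃ k : Fin r, ∀ (h : G) (hh : h ∈ H),
      φ i ⟨x j * h * (x j)⁻¹, hN.conj_mem h hh (x j)⟩ = φ k ⟨h, hh⟩)
    (K : ℕ → Subgroup G) (hK0 : K 0 = ⊥)
    (hKsucc : ∀ n, K (n + 1) = ⨅ i : Fin r, Subgroup.map H.subtype ((K n).comap (φ i))) :
    ∀ n, K n ≤ H ∧ (K n).Normal := by
  have : Nonempty (Fin r) := let ⟨i, _⟩ := hcover 1; ⟨i⟩
  intro n
  induction n with
  | zero => exact hK0 ▸ ⟨bot_le, inferInstance⟩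
  | succ n ih =>
    have : (K n).Normal := ih.2
    rw [hKsucc n]
    exact ⟨commonPreimage_le, commonPreimage_normal hN x hcover hconj⟩

theorem iterated_endomorphisms_K_normal {G : Type*} [Group G]
    (H : Subgroup G) (hN : H.Normal) (r : ℕ) (x : Fin r → G)
    -- the `x i` are coset representatives: `G = x 1 H ∪ ... ∪ x r H`
    (hcover : ∀ g : G, ∃ (i : Fin r) (h : G), h ∈ H ∧ g = x i * h)
    (φ : Fin r → (H →* G)) (hsurj : ∀ i, Function.Surjective (φ i))
    -- condition (2): for all `i, j` there is `k` with `φ i ∘ μ_{x j} = φ k`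
    (hconj : ∀ i j : Fin r, ∃ k : Fin r, ∀ (h : G) (hh : h ∈ H),
      φ i ⟨x j * h * (x j)⁻¹, hN.conj_mem h hh (x j)⟩ = φ k ⟨h, hh⟩)
    (K : ℕ → Subgroup G) (hK0 : K 0 = ⊥)
    (hKsucc : ∀ n, K (n + 1) = ⨅ i : Fin r, Subgroup.map H.subtype ((K n).comap (φ i))) :
    ∀ n, K n ≤ H ∧ (K n).Normal :=
  iterated_endomorphisms_K_normal_general H hN r x hcover φ hconj K hK0 hKsucc
end

section
/- In the setting of the iterated-endomorphism construction, assume moreover that ⋂_{i=1}^r ker(φ_i) ≠ 1 and that the image of the map H → G^r, h ↦ (φ_1(h),…,φ_r(h)), contains the diagonal subgroup of G^r. Then for every n ≥ 0 the subgroup K_n is strictly contained in K_{n+1}. -/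
theorem iterated_endomorphisms_K_strict_mono {G : Type*} [Group G]
    (H : Subgroup G) (hN : H.Normal) (r : ℕ) (x : Fin r → G)
    (hcover : ∀ g : G, ∃ (i : Fin r) (h : G), h ∈ H ∧ g = x i * h)
    (φ : Fin r → (H →* G)) (hsurj : ∀ i, Function.Surjective (φ i))
    (hconj : ∀ i j : Fin r, ∃ k : Fin r, ∀ (h : G) (hh : h ∈ H),
      φ i ⟨x j * h * (x j)⁻¹, hN.conj_mem h hh (x j)⟩ = φ k ⟨h, hh⟩)
    -- condition (1): `⋂ i ker (φ i) ≠ 1`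
    (hker : (⨅ i : Fin r, (φ i).ker) ≠ ⊥)
    -- condition (3): the image of `h ↦ (φ 1 h, …, φ r h)` contains the diagonal of `G^r`
    (hdiag : ∀ g : G, ∃ h : H, ∀ i : Fin r, φ i h = g)
    (K : ℕ → Subgroup G) (hK0 : K 0 = ⊥)
    (hKsucc : ∀ n, K (n + 1) = ⨅ i : Fin r, Subgroup.map H.subtype ((K n).comap (φ i))) :
    ∀ n, K n < K (n + 1) := by
  have hmono : ∀ n, K n ≤ K (n + 1) := by
    intro n
    induction n with
    | zero => rw [hK0]; exact bot_le
    | succ n ih =>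
      rw [hKsucc n, hKsucc (n + 1)]
      exact iInf_mono fun i => Subgroup.map_mono (Subgroup.comap_mono ih)
  have hex : ∀ n, ∃ g, g ∈ K (n + 1) ∧ g ∉ K n := by
    intro n
    induction n with
    | zero =>
      obtain ⟨⟨h, hmem⟩, hne⟩ := (Subgroup.ne_bot_iff_exists_ne_one).1 hker
      refine ⟨(h : G), ?_, ?_⟩
      · rw [hKsucc 0]
        refine Subgroup.mem_iInf.2 fun i => ?_
        refine ⟨h, ?_, rfl⟩
        have : h ∈ (φ i).ker := Subgroup.mem_iInf.1 hmem i
        simp only [Subgroup.mem_comap, hK0]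
        simpa [MonoidHom.mem_ker] using this
      · rw [hK0]
        simp only [Subgroup.mem_bot]
        intro hcontra
        apply hne
        ext
        exact hcontra
    | succ n ih =>
      obtain ⟨g, hg1, hg0⟩ := ih
      obtain ⟨h, hh⟩ := hdiag g
      refine ⟨(h : G), ?_, ?_⟩
      · rw [hKsucc (n + 1)]
        refine Subgroup.mem_iInf.2 fun i => ?_
        exact ⟨h, by simp [Subgroup.mem_comap, hh i, hg1], rfl⟩
      · intro hcontra
        obtain ⟨i, _, _, _⟩ := hcover 1
        rw [hKsucc n] at hcontra
        have := Subgroup.mem_iInf.1 hcontra i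
        obtain ⟨y, hy, hyeq⟩ := this
        have : y = h := Subtype.ext hyeq
        subst this
        have hy' : (φ i) y ∈ K n := hy
        rw [hh i] at hy'
        exact hg0 hy'
  intro n
  obtain ⟨g, hg1, hg0⟩ := hex n
  exact lt_of_le_of_ne (hmono n) fun heq => hg0 (heq ▸ hg1)
end

section
/- Let S be a finite generating subset of a group G, and suppose φ : H → G^r, h ↦ (φ_1(h),…,φ_r(h)), has image containing the diagonal, where H ≤ G. Then there exists a constant c > 0 such that for every g ∈ G there exists h ∈ H with φ_i(h) = g for every i and |h|_S ≤ c·|g|_S, where |·|_S denotes word length with respect to S in G. -/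
/-- The word length of `g ∈ G` with respect to the generating set `S`. -/
noncomputable def gLen {G : Type*} [Group G] [DecidableEq G] (S : Set G) (g : G) : ℕ :=
  sInf {n | ∃ w : FreeGroup S, FreeGroup.lift (fun s : S => (s : G)) w = g ∧ wordLen w = n}

/-!
Choose, for each generator `s ∈ S`, a diagonal lift `f s ∈ H` and let `ψ : F(S) → H` be the
homomorphism from the free group sending `s` to `f s`. Each `φ i ∘ ψ` agrees with the evaluation
map `F(S) → G` on generators, hence everywhere, so a geodesic word `w` for `g` yields the lift
`ψ w` of `g`. Since `S` is finite, the lengths `|f s|_S` are bounded by some `N`, and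
subadditivity of word length gives `|ψ w|_S ≤ N · |w| = N · |g|_S`.
-/

section WordLength

variable {G : Type*} [Group G] [DecidableEq G] {S : Set G}

lemma gLen_le_wordLen {g : G} {w : FreeGroup S}
    (hw : FreeGroup.lift (fun s : S => (s : G)) w = g) : gLen S g ≤ wordLen w :=
  Nat.sInf_le ⟨w, hw, rfl⟩

lemma exists_wordLen_eq_gLen (hgen : Subgroup.closure S = ⊤) (g : G) :
    ∃ w : FreeGroup S, FreeGroup.lift (fun s : S => (s : G)) w = g ∧ wordLen w = gLen S g := by
  have hg : g ∈ (FreeGroup.lift (fun s : S => (s : G))).range := by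
    rw [FreeGroup.range_lift_eq_closure, Subtype.range_coe, hgen]
    trivial
  obtain ⟨w, hw⟩ := hg
  exact Nat.sInf_mem
    (s := {n | ∃ w : FreeGroup S, FreeGroup.lift (fun s : S => (s : G)) w = g ∧ wordLen w = n})
    ⟨wordLen w, w, hw, rfl⟩

lemma gLen_one : gLen S (1 : G) = 0 :=
  Nat.le_zero.mp (gLen_le_wordLen (w := 1) (map_one _))

lemma gLen_inv_le (hgen : Subgroup.closure S = ⊤) (g : G) : gLen S g⁻¹ ≤ gLen S g := by
  obtain ⟨w, hw, hlen⟩ := exists_wordLen_eq_gLen hgen g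
  calc gLen S g⁻¹ ≤ wordLen w⁻¹ := gLen_le_wordLen (by rw [map_inv, hw])
    _ = gLen S g := by
        rw [← hlen, wordLen, wordLen, FreeGroup.toWord_inv, FreeGroup.invRev_length]

lemma gLen_mul_le (hgen : Subgroup.closure S = ⊤) (a b : G) :
    gLen S (a * b) ≤ gLen S a + gLen S b := by
  obtain ⟨wa, hwa, hla⟩ := exists_wordLen_eq_gLen hgen a
  obtain ⟨wb, hwb, hlb⟩ := exists_wordLen_eq_gLen hgen b
  calc gLen S (a * b) ≤ wordLen (wa * wb) := gLen_le_wordLen (by rw [map_mul, hwa, hwb])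
    _ ≤ wordLen wa + wordLen wb := by
        simpa [wordLen] using (FreeGroup.toWord_mul_sublist wa wb).length_le
    _ = gLen S a + gLen S b := by rw [hla, hlb]

lemma gLen_map_mk_le {α : Type*} (hgen : Subgroup.closure S = ⊤) (ψ : FreeGroup α →* G)
    {N : ℕ} (hN : ∀ a, gLen S (ψ (FreeGroup.of a)) ≤ N) (L : List (α × Bool)) :
    gLen S (ψ (FreeGroup.mk L)) ≤ N * L.length := by
  induction L with
  | nil => simp [← FreeGroup.one_eq_mk, gLen_one]
  | cons x L ih =>
    have hx : gLen S (ψ (FreeGroup.mk [x])) ≤ N := by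
      obtain ⟨a, _ | _⟩ := x
      · rw [show FreeGroup.mk [(a, false)] = (FreeGroup.of a)⁻¹ from rfl, map_inv]
        exact (gLen_inv_le hgen _).trans (hN a)
      · exact hN a
    calc gLen S (ψ (FreeGroup.mk (x :: L)))
        ≤ gLen S (ψ (FreeGroup.mk [x])) + gLen S (ψ (FreeGroup.mk L)) := by
          rw [← List.singleton_append, ← FreeGroup.mul_mk, map_mul]
          exact gLen_mul_le hgen _ _
      _ ≤ N + N * L.length := add_le_add hx ih
      _ = N * (x :: L).length := by rw [List.length_cons]; ring

lemma gLen_map_le {α : Type*} [DecidableEq α] (hgen : Subgroup.closure S = ⊤)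
    (ψ : FreeGroup α →* G) {N : ℕ} (hN : ∀ a, gLen S (ψ (FreeGroup.of a)) ≤ N)
    (w : FreeGroup α) : gLen S (ψ w) ≤ N * wordLen w := by
  simpa only [FreeGroup.mk_toWord, wordLen] using gLen_map_mk_le hgen ψ hN w.toWord

end WordLength

theorem diagonal_lift_length_control {G : Type*} [Group G] [DecidableEq G]
    (S : Set G) (hSfin : S.Finite) (hgen : Subgroup.closure S = ⊤)
    (H : Subgroup G) (r : ℕ) (φ : Fin r → (H →* G))
    (hdiag : ∀ g : G, ∃ h : H, ∀ i : Fin r, φ i h = g) :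
    ∃ c : ℝ, 0 < c ∧ ∀ g : G, ∃ h : H,
      (∀ i : Fin r, φ i h = g) ∧ (gLen S (h : G) : ℝ) ≤ c * gLen S g := by
  choose f hf using hdiag
  obtain ⟨N, hN⟩ := (hSfin.image fun s => gLen S (f s : G)).bddAbove
  let ψ : FreeGroup S →* H := FreeGroup.lift fun s => f s
  have hψ : ∀ i, (φ i).comp ψ = FreeGroup.lift fun s : S => (s : G) := fun i =>
    FreeGroup.ext_hom _ _ fun s => by simp [ψ, hf]
  refine ⟨N + 1, by positivity, fun g => ?_⟩
  obtain ⟨w, hw, hlen⟩ := exists_wordLen_eq_gLen hgen g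
  refine ⟨ψ w, fun i => by rw [← hw, ← hψ i]; rfl, ?_⟩
  have hbound : gLen S (ψ w : G) ≤ N * gLen S g := by
    rw [← hlen]
    exact gLen_map_le hgen (H.subtype.comp ψ) (fun s => hN ⟨s, s.2, by simp [ψ]⟩) w
  calc (gLen S (ψ w : G) : ℝ) ≤ N * gLen S g := by exact_mod_cast hbound
    _ ≤ (N + 1) * gLen S g := by gcongr; linarith
end

section
/- Let A *_C B be an amalgamated free product, and let a ∈ A ∖ C, b ∈ B ∖ C be such that for every nonzero integer k, a^k ∉ C and b^k ∉ C. Then a and b freely generate a free subgroup of rank 2 in A *_C B. -/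
open Monoid

/-- In an amalgamated free product `A *_C B`, if `a ∈ A ∖ C`, `b ∈ B ∖ C` and no nonzero
power of `a` or of `b` lies in `C`, then `a` and `b` freely generate a free subgroup. -/
theorem amalgam_free_subgroup {C : Type*} [Group C]
    (G : Bool → Type*) [∀ i, Group (G i)]
    (φ : ∀ i, C →* G i) (hφ : ∀ i, Function.Injective (φ i))
    (a : G true) (ha : a ∉ (φ true).range)
    (b : G false) (hb : b ∉ (φ false).range)
    (hapow : ∀ k : ℤ, k ≠ 0 → a ^ k ∉ (φ true).range)
    (hbpow : ∀ k : ℤ, k ≠ 0 → b ^ k ∉ (φ false).range) :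
    Function.Injective (FreeGroup.lift (fun i : Bool =>
      if i then PushoutI.of (φ := φ) true a else PushoutI.of (φ := φ) false b)) := by
  classical
  -- the designated elements
  let g : ∀ i : Bool, G i := fun i => Bool.rec b a i
  have hgpow : ∀ (i : Bool) (k : ℤ), k ≠ 0 → g i ^ k ∉ (φ i).range := by
    intro i
    cases i
    · exact hbpow
    · exact hapow
  -- maps from `FreeGroup Unit` into the summands
  let f : ∀ i : Bool, FreeGroup Unit →* G i := fun i => FreeGroup.lift fun _ => g i
  have hf : ∀ (i : Bool) (h : FreeGroup Unit), h ≠ 1 → f i h ∉ (φ i).range := by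
    intro i h hne
    have hrepr : h = FreeGroup.of () ^ (FreeGroup.freeGroupUnitEquivInt h) :=
      (FreeGroup.freeGroupUnitEquivInt.left_inv h).symm
    have hn0 : FreeGroup.freeGroupUnitEquivInt h ≠ 0 := by
      intro h0
      apply hne
      rw [hrepr, h0, zpow_zero]
    rw [hrepr]
    simp only [f, map_zpow, FreeGroup.lift_apply_of]
    exact hgpow i _ hn0
  have hfne : ∀ (i : Bool) (h : FreeGroup Unit), h ≠ 1 → f i h ≠ 1 := by
    intro i h hne h1
    exact hf i h hne (h1 ▸ one_mem _)
  -- the map from the coproduct of copies of `FreeGroup Unit`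
  let Φ : CoprodI (fun _ : Bool => FreeGroup Unit) →* PushoutI φ :=
    (PushoutI.ofCoprodI).comp (CoprodI.lift fun i => (CoprodI.of (M := G)).comp (f i))
  have keyinj : Function.Injective Φ := by
    refine (injective_iff_map_eq_one Φ).mpr ?_
    rw [(CoprodI.Word.equiv (M := fun _ : Bool => FreeGroup Unit)).forall_congr_left]
    intro w Heq
    dsimp only [CoprodI.Word.equiv, Equiv.coe_fn_symm_mk] at *
    -- build the corresponding reduced word in the pushout
    let w' : CoprodI.Word G :=
      ⟨w.toList.map fun l => ⟨l.1, f l.1 l.2⟩,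
        by
          intro l hl
          rw [List.mem_map] at hl
          obtain ⟨p, hp, rfl⟩ := hl
          exact hfne p.1 p.2 (w.ne_one p hp),
        by
          rw [List.isChain_map]
          exact w.chain_ne⟩
    have hred : PushoutI.Reduced φ w' := by
      intro l hl
      rw [List.mem_map] at hl
      obtain ⟨p, hp, rfl⟩ := hl
      exact hf p.1 p.2 (w.ne_one p hp)
    have hprod : PushoutI.ofCoprodI (φ := φ) w'.prod = Φ w.prod := by
      show PushoutI.ofCoprodI (φ := φ) (List.prod _) = Φ (List.prod _)
      rw [map_list_prod, map_list_prod, List.map_map, List.map_map, List.map_map]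
      congr 1
    have hmem : PushoutI.ofCoprodI (φ := φ) w'.prod ∈ (PushoutI.base φ).range := by
      rw [hprod, Heq]
      exact one_mem _
    have hempty : w' = CoprodI.Word.empty := hred.eq_empty_of_mem_range hφ hmem
    have hnil : w.toList = [] := by
      have := congrArg CoprodI.Word.toList hempty
      simpa [w', CoprodI.Word.empty] using this
    show w.prod = 1
    unfold CoprodI.Word.prod
    rw [hnil]
    simp
  -- factor the free group lift through `Φ`
  have hfactor : FreeGroup.lift (fun i : Bool =>
      if i then PushoutI.of (φ := φ) true a else PushoutI.of (φ := φ) false b)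
      = Φ.comp (freeGroupEquivCoprodI (ι := Bool)).toMonoidHom := by
    ext i
    cases i <;> simp [Φ, f, g, freeGroupEquivCoprodI]
  rw [hfactor, MonoidHom.coe_comp]
  exact keyinj.comp (MulEquiv.injective _)
end

section
/- If a and b freely generate a free subgroup of a group G, then for every k ≥ 1 the elements ab, a²b², …, a^k b^k freely generate a free subgroup of rank k. -/
open FreeGroup List

section Helpers
variable {α : Type*} [DecidableEq α]

lemma my_reduce_cons_eq {x : α × Bool} {L : List (α × Bool)} (hL : reduce L = L)
    (h : ∀ y ∈ L.head?, ¬(x.1 = y.1 ∧ x.2 = !y.2)) : reduce (x :: L) = x :: L := by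
  cases L with
  | nil => rfl
  | cons y t =>
    have hy : ¬(x.1 = y.1 ∧ x.2 = !y.2) := h y (by simp)
    rw [FreeGroup.reduce.cons, hL]
    show (if x.1 = y.1 ∧ x.2 = !y.2 then t else x :: y :: t) = x :: y :: t
    rw [if_neg hy]

lemma my_reduce_rep_append {x : α × Bool} (n : ℕ) {L : List (α × Bool)} (hL : reduce L = L)
    (h : ∀ y ∈ L.head?, ¬(x.1 = y.1 ∧ x.2 = !y.2)) :
    reduce (List.replicate n x ++ L) = List.replicate n x ++ L := by
  induction n with
  | zero => simpa using hL
  | succ n ih =>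
    rw [List.replicate_succ, List.cons_append]
    refine my_reduce_cons_eq ih ?_
    cases n with
    | zero => simpa using h
    | succ n =>
      rw [List.replicate_succ, List.cons_append]
      intro y hy
      simp only [head?_cons, Option.mem_some_iff] at hy
      subst hy
      simp

lemma my_reduce_of_reduce_cons {x : α × Bool} {L : List (α × Bool)}
    (h : reduce (x :: L) = x :: L) : reduce L = L := by
  have hlen := FreeGroup.Red.length_le (FreeGroup.reduce.red (L := L))
  cases hR : reduce L with
  | nil =>
    rw [FreeGroup.reduce.cons, hR] at h
    have h' : [x] = x :: L := h
    exact List.cons_injective h'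
  | cons y t =>
    rw [FreeGroup.reduce.cons, hR] at h
    have h' : (if x.1 = y.1 ∧ x.2 = !y.2 then t else x :: y :: t) = x :: L := h
    by_cases hc : x.1 = y.1 ∧ x.2 = !y.2
    · rw [if_pos hc] at h'
      have h1 : t.length = L.length + 1 := by simpa using congrArg List.length h'
      rw [hR] at hlen
      simp at hlen
      omega
    · rw [if_neg hc] at h'
      exact List.cons_injective h'

lemma my_reduce_suffix {M L : List (α × Bool)} (h : reduce (M ++ L) = M ++ L) :
    reduce L = L := by
  induction M with
  | nil => simpa using h
  | cons x M ih => exact ih (my_reduce_of_reduce_cons h)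

lemma my_no_pair {T M L : List (α × Bool)} {x : α} {b : Bool} (hT : reduce T = T)
    (h : T = M ++ (x, b) :: (x, !b) :: L) : False :=
  FreeGroup.reduce.not (hT.trans h)

lemma my_exists_run {γ : Type*} [DecidableEq γ] (c : γ) (T : List γ) :
    ∃ m L, T = List.replicate m c ++ L ∧ ∀ y ∈ L.head?, y ≠ c := by
  induction T with
  | nil => exact ⟨0, [], by simp⟩
  | cons t T ih =>
    obtain ⟨m, L, hT, hL⟩ := ih
    by_cases h : t = c
    · exact ⟨m + 1, L, by rw [List.replicate_succ, List.cons_append, hT, h], hL⟩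
    · exact ⟨0, t :: T, by simp, by simpa using h⟩

lemma my_mk_rep_true (c : α) (n : ℕ) :
    FreeGroup.mk (List.replicate n (c, true)) = FreeGroup.of c ^ n := by
  rw [← FreeGroup.toWord_of_pow, FreeGroup.mk_toWord]

lemma my_mk_rep_false (c : α) (n : ℕ) :
    FreeGroup.mk (List.replicate n (c, false)) = (FreeGroup.of c)⁻¹ ^ n := by
  rw [inv_pow, ← my_mk_rep_true c n, FreeGroup.inv_mk]
  congr 1
  simp [FreeGroup.invRev]

lemma my_rep_eq_rep {γ : Type*} {c : γ} {m n : ℕ} {L₁ L₂ : List γ}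
    (h : List.replicate m c ++ L₁ = List.replicate n c ++ L₂) (hmn : m < n) :
    L₁ = List.replicate (n - m) c ++ L₂ := by
  have := congrArg (List.drop m) h
  rwa [List.drop_append_of_le_length (by simp), List.drop_append_of_le_length (by simp; omega),
    List.drop_replicate, List.drop_replicate, Nat.sub_self, List.replicate_zero,
    List.nil_append] at this

lemma my_head_rep {γ : Type*} {c : γ} {n : ℕ} (hn : 1 ≤ n) (L : List γ) :
    (List.replicate n c ++ L).head? = some c := by
  obtain ⟨p, rfl⟩ : ∃ p, n = p + 1 := ⟨n - 1, by omega⟩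
  rw [List.replicate_succ, List.cons_append, List.head?_cons]

lemma my_pair_ne {y : Bool × Bool} {c d : Bool} (h : y ≠ (c, !d)) :
    ¬(((c, d) : Bool × Bool).1 = y.1 ∧ ((c, d) : Bool × Bool).2 = !y.2) := by
  obtain ⟨e, f⟩ := y
  revert h
  cases e <;> cases f <;> cases c <;> cases d <;> decide

lemma my_c1 {G : Type*} [Group G] (g x : G) {m n : ℕ} (h : m ≤ n) :
    g ^ n * (g⁻¹ ^ m * x) = g ^ (n - m) * x := by
  have h1 : g ^ n = g ^ (n - m) * g ^ m := by rw [← pow_add]; congr 1; omega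
  rw [h1, mul_assoc, inv_pow, mul_inv_cancel_left]

lemma my_c2 {G : Type*} [Group G] (g x : G) {m n : ℕ} (h : n ≤ m) :
    g ^ n * (g⁻¹ ^ m * x) = g⁻¹ ^ (m - n) * x := by
  have h1 : g⁻¹ ^ m = g⁻¹ ^ n * g⁻¹ ^ (m - n) := by rw [← pow_add]; congr 1; omega
  calc g ^ n * (g⁻¹ ^ m * x) = g ^ n * (g⁻¹ ^ n * (g⁻¹ ^ (m - n) * x)) := by
        rw [h1, mul_assoc]
    _ = g⁻¹ ^ (m - n) * x := by rw [inv_pow, mul_inv_cancel_left]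

lemma my_c3 {G : Type*} [Group G] (g x : G) {m n : ℕ} (h : m ≤ n) :
    g⁻¹ ^ n * (g ^ m * x) = g⁻¹ ^ (n - m) * x := by
  have := my_c1 (g := g⁻¹) (x := x) (m := m) (n := n) h
  rwa [inv_inv] at this

lemma my_c4 {G : Type*} [Group G] (g x : G) {m n : ℕ} (h : n ≤ m) :
    g⁻¹ ^ n * (g ^ m * x) = g ^ (m - n) * x := by
  have := my_c2 (g := g⁻¹) (x := x) (m := m) (n := n) h
  rwa [inv_inv] at this

end Helpers

/-- Ping-pong set X: reduced words starting with exactly `n` letters `α` followed by `β^{±1}`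
or nothing. -/
def pingX (n : ℕ) : Set (FreeGroup Bool) :=
  {w | ∃ L, w.toWord = List.replicate n ((true, true) : Bool × Bool) ++ L ∧
    ∀ y ∈ L.head?, y.1 = false}

/-- Ping-pong set Y: reduced words starting with exactly `n` letters `β⁻¹` followed by `α^{±1}`. -/
def pingY (n : ℕ) : Set (FreeGroup Bool) :=
  {w | ∃ L x, w.toWord = List.replicate n ((false, false) : Bool × Bool) ++ (true, x) :: L}

lemma pingX_nonempty (n : ℕ) : (pingX n).Nonempty :=
  ⟨FreeGroup.mk (List.replicate n (true, true)),
    ⟨[], by rw [FreeGroup.toWord_mk, FreeGroup.reduce_replicate, List.append_nil], by simp⟩⟩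

lemma pingX_disj {m n : ℕ} (h : m < n) : Disjoint (pingX m) (pingX n) := by
  rw [Set.disjoint_left]
  rintro w ⟨L₁, h1, hh1⟩ ⟨L₂, h2, hh2⟩
  have heq := my_rep_eq_rep (h1.symm.trans h2) h
  have : L₁.head? = some ((true, true) : Bool × Bool) := by
    rw [heq, my_head_rep (by omega)]
  have := hh1 (true, true) (by rw [this]; rfl)
  simp at this

lemma pingY_disj {m n : ℕ} (h : m < n) : Disjoint (pingY m) (pingY n) := by
  rw [Set.disjoint_left]
  rintro w ⟨L₁, x₁, h1⟩ ⟨L₂, x₂, h2⟩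
  have heq := my_rep_eq_rep (h1.symm.trans h2) h
  have := congrArg List.head? heq
  rw [my_head_rep (by omega)] at this
  simp at this

lemma pingXY_disj {m n : ℕ} (hm : 1 ≤ m) (hn : 1 ≤ n) : Disjoint (pingX m) (pingY n) := by
  rw [Set.disjoint_left]
  rintro w ⟨L₁, h1, hh1⟩ ⟨L₂, x₂, h2⟩
  have heq := h1.symm.trans h2
  have := congrArg List.head? heq
  rw [my_head_rep hm, my_head_rep hn] at this
  simp at this

lemma pingX_mem {n : ℕ} (hn : 1 ≤ n) {w : FreeGroup Bool} (hw : w ∉ pingY n) :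
    FreeGroup.of true ^ n * FreeGroup.of false ^ n * w ∈ pingX n := by
  obtain ⟨m, L, hT, hhead⟩ := my_exists_run ((false, false) : Bool × Bool) w.toWord
  have hred := FreeGroup.reduce_toWord w
  rw [hT] at hred
  have hLred : reduce L = L := my_reduce_suffix hred
  have hw' : w = (FreeGroup.of false)⁻¹ ^ m * FreeGroup.mk L := by
    rw [← my_mk_rep_false, FreeGroup.mul_mk, ← hT, FreeGroup.mk_toWord]
  have hheadB : 1 ≤ m → ∀ y ∈ L.head?, y ≠ ((false, true) : Bool × Bool) := by
    intro hm y hy hyB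
    subst hyB
    cases L with
    | nil => simp at hy
    | cons z t =>
      have hz : z = ((false, true) : Bool × Bool) := by simpa using hy
      subst hz
      refine my_no_pair (M := List.replicate (m - 1) ((false, false) : Bool × Bool))
        (L := t) (x := false) (b := false) hred ?_
      rw [show m = (m - 1) + 1 by omega, List.replicate_succ']
      simp
  rcases lt_trichotomy m n with hm | hm | hm
  · -- m < n : result starts with n α's then β's
    refine ⟨List.replicate (n - m) ((false, true) : Bool × Bool) ++ L, ?_, ?_⟩
    · have hkey : FreeGroup.of true ^ n * FreeGroup.of false ^ n * w =
          FreeGroup.mk (List.replicate n ((true, true) : Bool × Bool) ++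
            (List.replicate (n - m) ((false, true) : Bool × Bool) ++ L)) := by
        rw [hw', mul_assoc, my_c1 _ _ hm.le, ← FreeGroup.mul_mk, ← FreeGroup.mul_mk,
          my_mk_rep_true, my_mk_rep_true]
      rw [hkey, FreeGroup.toWord_mk]
      refine my_reduce_rep_append n (my_reduce_rep_append (n - m) hLred ?_) ?_
      · exact fun y hy => my_pair_ne (by simpa using hhead y hy)
      · intro y hy
        rw [my_head_rep (by omega)] at hy
        have : y = ((false, true) : Bool × Bool) := by simp at hy; exact hy.symm
        subst this
        decide
    · intro y hy
      rw [my_head_rep (by omega)] at hy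
      have : y = ((false, true) : Bool × Bool) := by simp at hy; exact hy.symm
      subst this
      rfl
  · -- m = n : w is exactly β^{-n}, result is α^n
    subst hm
    have hL : L = [] := by
      cases L with
      | nil => rfl
      | cons y t =>
        obtain ⟨c, d⟩ := y
        cases c
        · cases d
          · exact absurd rfl (hhead (false, false) (by simp))
          · exact absurd rfl (hheadB hn (false, true) (by simp))
        · exact absurd ⟨t, d, hT⟩ hw
    refine ⟨[], ?_, by simp⟩
    have hkey : FreeGroup.of true ^ m * FreeGroup.of false ^ m * w =
        FreeGroup.mk (List.replicate m ((true, true) : Bool × Bool) ++ []) := by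
      rw [hw', hL, mul_assoc, my_c1 _ _ le_rfl, Nat.sub_self, pow_zero, one_mul,
        List.append_nil, my_mk_rep_true, ← FreeGroup.one_eq_mk, mul_one]
    rw [hkey, FreeGroup.toWord_mk, List.append_nil, FreeGroup.reduce_replicate]
  · -- n < m : result starts with n α's then β⁻¹'s
    refine ⟨List.replicate (m - n) ((false, false) : Bool × Bool) ++ L, ?_, ?_⟩
    · have hkey : FreeGroup.of true ^ n * FreeGroup.of false ^ n * w =
          FreeGroup.mk (List.replicate n ((true, true) : Bool × Bool) ++
            (List.replicate (m - n) ((false, false) : Bool × Bool) ++ L)) := by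
        rw [hw', mul_assoc, my_c2 _ _ hm.le, ← FreeGroup.mul_mk, ← FreeGroup.mul_mk,
          my_mk_rep_true, my_mk_rep_false]
      rw [hkey, FreeGroup.toWord_mk]
      refine my_reduce_rep_append n (my_reduce_rep_append (m - n) hLred ?_) ?_
      · exact fun y hy => my_pair_ne (by simpa using hheadB (by omega) y hy)
      · intro y hy
        rw [my_head_rep (by omega)] at hy
        have : y = ((false, false) : Bool × Bool) := by simp at hy; exact hy.symm
        subst this
        decide
    · intro y hy
      rw [my_head_rep (by omega)] at hy
      have : y = ((false, false) : Bool × Bool) := by simp at hy; exact hy.symm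
      subst this
      rfl

lemma pingY_mem {n : ℕ} (hn : 1 ≤ n) {w : FreeGroup Bool} (hw : w ∉ pingX n) :
    (FreeGroup.of true ^ n * FreeGroup.of false ^ n)⁻¹ * w ∈ pingY n := by
  have hinv : (FreeGroup.of true ^ n * FreeGroup.of false ^ n)⁻¹ =
      (FreeGroup.of false)⁻¹ ^ n * (FreeGroup.of true)⁻¹ ^ n := by
    rw [mul_inv_rev, inv_pow, inv_pow]
  obtain ⟨m, L, hT, hhead⟩ := my_exists_run ((true, true) : Bool × Bool) w.toWord
  have hred := FreeGroup.reduce_toWord w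
  rw [hT] at hred
  have hLred : reduce L = L := my_reduce_suffix hred
  have hw' : w = FreeGroup.of true ^ m * FreeGroup.mk L := by
    rw [← my_mk_rep_true, FreeGroup.mul_mk, ← hT, FreeGroup.mk_toWord]
  have hheadA : 1 ≤ m → ∀ y ∈ L.head?, y ≠ ((true, false) : Bool × Bool) := by
    intro hm y hy hyA
    subst hyA
    cases L with
    | nil => simp at hy
    | cons z t =>
      have hz : z = ((true, false) : Bool × Bool) := by simpa using hy
      subst hz
      refine my_no_pair (M := List.replicate (m - 1) ((true, true) : Bool × Bool))
        (L := t) (x := true) (b := true) hred ?_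
      rw [show m = (m - 1) + 1 by omega, List.replicate_succ']
      simp
  rcases lt_trichotomy m n with hm | hm | hm
  · -- m < n : result is β^{-n} α^{-(n-m)} (mk L)
    obtain ⟨p, hp⟩ : ∃ p, n - m = p + 1 := ⟨n - m - 1, by omega⟩
    refine ⟨List.replicate p ((true, false) : Bool × Bool) ++ L, false, ?_⟩
    have hkey : (FreeGroup.of true ^ n * FreeGroup.of false ^ n)⁻¹ * w =
        FreeGroup.mk (List.replicate n ((false, false) : Bool × Bool) ++
          (List.replicate (n - m) ((true, false) : Bool × Bool) ++ L)) := by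
      rw [hinv, hw', mul_assoc, my_c3 _ _ hm.le, ← FreeGroup.mul_mk, ← FreeGroup.mul_mk,
        my_mk_rep_false, my_mk_rep_false]
    have hW : ((FreeGroup.of true ^ n * FreeGroup.of false ^ n)⁻¹ * w).toWord =
        List.replicate n ((false, false) : Bool × Bool) ++
          (List.replicate (n - m) ((true, false) : Bool × Bool) ++ L) := by
      rw [hkey, FreeGroup.toWord_mk]
      refine my_reduce_rep_append n (my_reduce_rep_append (n - m) hLred ?_) ?_
      · exact fun y hy => my_pair_ne (by simpa using hhead y hy)
      · intro y hy
        rw [my_head_rep (by omega)] at hy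
        have : y = ((true, false) : Bool × Bool) := by simp at hy; exact hy.symm
        subst this
        decide
    rw [hW, hp, List.replicate_succ, List.cons_append]
  · -- m = n : contradiction, w ∈ pingX n
    subst hm
    refine absurd ⟨L, hT, ?_⟩ hw
    intro y hy
    obtain ⟨c, d⟩ := y
    cases c
    · rfl
    · cases d
      · exact absurd rfl (hheadA hn (true, false) hy)
      · exact absurd rfl (hhead (true, true) hy)
  · -- n < m : result is β^{-n} α^{m-n} (mk L)
    obtain ⟨p, hp⟩ : ∃ p, m - n = p + 1 := ⟨m - n - 1, by omega⟩
    refine ⟨List.replicate p ((true, true) : Bool × Bool) ++ L, true, ?_⟩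
    have hkey : (FreeGroup.of true ^ n * FreeGroup.of false ^ n)⁻¹ * w =
        FreeGroup.mk (List.replicate n ((false, false) : Bool × Bool) ++
          (List.replicate (m - n) ((true, true) : Bool × Bool) ++ L)) := by
      rw [hinv, hw', mul_assoc, my_c4 _ _ hm.le, ← FreeGroup.mul_mk, ← FreeGroup.mul_mk,
        my_mk_rep_false, my_mk_rep_true]
    have hW : ((FreeGroup.of true ^ n * FreeGroup.of false ^ n)⁻¹ * w).toWord =
        List.replicate n ((false, false) : Bool × Bool) ++
          (List.replicate (m - n) ((true, true) : Bool × Bool) ++ L) := by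
      rw [hkey, FreeGroup.toWord_mk]
      refine my_reduce_rep_append n (my_reduce_rep_append (m - n) hLred ?_) ?_
      · exact fun y hy => my_pair_ne (by simpa using hheadA (by omega) y hy)
      · intro y hy
        rw [my_head_rep (by omega)] at hy
        have : y = ((true, true) : Bool × Bool) := by simp at hy; exact hy.symm
        subst this
        decide
    rw [hW, hp, List.replicate_succ, List.cons_append]

theorem my_key (k : ℕ) [Nontrivial (Fin k)] :
    Function.Injective (FreeGroup.lift (fun i : Fin k =>
      FreeGroup.of true ^ ((i : ℕ) + 1) * FreeGroup.of false ^ ((i : ℕ) + 1))) := by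
  apply FreeGroup.injective_lift_of_ping_pong _
    (fun i : Fin k => pingX ((i : ℕ) + 1)) (fun i : Fin k => pingY ((i : ℕ) + 1))
  · exact fun i => pingX_nonempty _
  · intro i j hij
    have hne : (i : ℕ) ≠ (j : ℕ) := fun h => hij (Fin.ext h)
    rcases hne.lt_or_gt with h | h
    · exact pingX_disj (by omega)
    · exact (pingX_disj (by omega)).symm
  · intro i j hij
    have hne : (i : ℕ) ≠ (j : ℕ) := fun h => hij (Fin.ext h)
    rcases hne.lt_or_gt with h | h
    · exact pingY_disj (by omega)
    · exact (pingY_disj (by omega)).symm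
  · intro i j
    exact pingXY_disj (by omega) (by omega)
  · intro i v hv
    obtain ⟨w, hw, rfl⟩ := hv
    simp only [smul_eq_mul]
    exact pingX_mem (by omega) hw
  · intro i v hv
    obtain ⟨w, hw, rfl⟩ := hv
    simp only [Pi.inv_apply, smul_eq_mul]
    exact pingY_mem (by omega) hw

theorem my_key' (k : ℕ) (hk : 1 ≤ k) :
    Function.Injective (FreeGroup.lift (fun i : Fin k =>
      FreeGroup.of true ^ ((i : ℕ) + 1) * FreeGroup.of false ^ ((i : ℕ) + 1))) := by
  have hcomp : (FreeGroup.lift (fun i : Fin k =>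
        FreeGroup.of true ^ ((i : ℕ) + 1) * FreeGroup.of false ^ ((i : ℕ) + 1)))
      = (FreeGroup.lift (fun i : Fin (k + 2) =>
          FreeGroup.of true ^ ((i : ℕ) + 1) * FreeGroup.of false ^ ((i : ℕ) + 1))).comp
        (FreeGroup.map (Fin.castLE (by omega : k ≤ k + 2))) := by
    apply FreeGroup.ext_hom
    intro i
    simp
  have hinj : Function.Injective
      (FreeGroup.map (Fin.castLE (by omega : k ≤ k + 2)) :
        FreeGroup (Fin k) →* FreeGroup (Fin (k + 2))) := by
    intro x y hxy
    have hg : (fun j : Fin (k + 2) => if h : (j : ℕ) < k then (⟨j, h⟩ : Fin k) else ⟨0, by omega⟩)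
        ∘ (Fin.castLE (by omega : k ≤ k + 2)) = id := by
      funext i
      simp [Fin.ext_iff, i.2]
    have := congrArg (FreeGroup.map
      (fun j : Fin (k + 2) => if h : (j : ℕ) < k then (⟨j, h⟩ : Fin k) else ⟨0, by omega⟩)) hxy
    rwa [FreeGroup.map.comp, FreeGroup.map.comp, hg, FreeGroup.map.id, FreeGroup.map.id] at this
  intro x y hxy
  apply hinj
  apply my_key (k + 2)
  have := congrArg (fun z => z) hxy
  calc (FreeGroup.lift (fun i : Fin (k + 2) =>
        FreeGroup.of true ^ ((i : ℕ) + 1) * FreeGroup.of false ^ ((i : ℕ) + 1)))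
          (FreeGroup.map (Fin.castLE (by omega : k ≤ k + 2)) x)
      = (FreeGroup.lift (fun i : Fin k =>
          FreeGroup.of true ^ ((i : ℕ) + 1) * FreeGroup.of false ^ ((i : ℕ) + 1))) x := by
        rw [hcomp]; rfl
    _ = (FreeGroup.lift (fun i : Fin k =>
          FreeGroup.of true ^ ((i : ℕ) + 1) * FreeGroup.of false ^ ((i : ℕ) + 1))) y := hxy
    _ = (FreeGroup.lift (fun i : Fin (k + 2) =>
        FreeGroup.of true ^ ((i : ℕ) + 1) * FreeGroup.of false ^ ((i : ℕ) + 1)))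
          (FreeGroup.map (Fin.castLE (by omega : k ≤ k + 2)) y) := by
        rw [hcomp]; rfl

/-- If `a, b` freely generate a free subgroup of `G`, then for every `k ≥ 1` the elements
`ab, a²b², …, aᵏbᵏ` freely generate a free subgroup of rank `k`. -/
theorem free_subgroup_powers {G : Type*} [Group G] (a b : G)
    (hab : Function.Injective (FreeGroup.lift (fun i : Bool => if i then a else b))) :
    ∀ k : ℕ, 1 ≤ k →
      Function.Injective (FreeGroup.lift (fun i : Fin k =>
        a ^ ((i : ℕ) + 1) * b ^ ((i : ℕ) + 1))) := by
  intro k hk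
  have hcomp : (FreeGroup.lift (fun i : Fin k => a ^ ((i : ℕ) + 1) * b ^ ((i : ℕ) + 1)))
      = (FreeGroup.lift (fun i : Bool => if i then a else b)).comp
        (FreeGroup.lift (fun i : Fin k =>
          FreeGroup.of true ^ ((i : ℕ) + 1) * FreeGroup.of false ^ ((i : ℕ) + 1))) := by
    apply FreeGroup.ext_hom
    intro i
    simp
  rw [hcomp, MonoidHom.coe_comp]
  exact hab.comp (my_key' k hk)
end

section
/- Let G = M ⋊ ⟨t⟩ with ⟨t⟩ ≅ ℤ, generated by S ∪ {t} with S = {m_1,…,m_ℓ} ⊆ M. Let F be the free group on m_1,…,m_ℓ,t, let R be the kernel of F → G, let R_n be the normal closure in F of R intersected with the n-ball, and let R'_n be the kernel of F → G_n, where G_n is the HNN-extension of M_{[0,n]} along the conjugation-by-t isomorphism M_{[0,n-1]} → M_{[1,n]} (with M_{[u,v]} the subgroup of M generated by ⋃_{u ≤ k ≤ v} t^k S t^{-k}). Then R_{2n+3} ⊆ R'_n. -/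
/-!
A relation `w` of length at most `2n+3` has `t`-exponent sum zero. Call the `t`-exponent of the
prefix preceding a letter its height. Any two letters `m_i^{±1}` of `w` cut the cyclic word into two
arcs whose `t`-exponent sums have equal absolute value and whose lengths add up to at most `2n+1`,
so their heights differ by at most `n`. After conjugating by a power of `t` all these heights lie in
`[0, n]`, and then `w` is a product of elements `t^h m_i^{±1} t^{-h}` with `0 ≤ h ≤ n`, which
already lie in `M_{[0,n]}` inside `G_n` (iterate `t a t⁻¹ = φ a`). So the image of `w` in `G_n` is
conjugate into `M_{[0,n]}`; the map `G_n → G` is injective on `M_{[0,n]}` and kills `w`, hence the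
image is trivial.
-/

section Heights

variable {α : Type*} {f : α → ℤ}

lemma abs_sum_map_le_length (hf : ∀ a, |f a| ≤ 1) (L : List α) :
    |(L.map f).sum| ≤ L.length := by
  induction L with
  | nil => simp
  | cons a L ih =>
    simp only [List.map_cons, List.sum_cons, List.length_cons, Nat.cast_succ]
    linarith [abs_add_le (f a) (L.map f).sum, hf a]

/-- The arcs of the cyclic word from `x` to `y` and from `y` back to `x` have weights of equal
absolute value and total length at most `2 * n + 1`. -/
lemma abs_sum_map_between_le (hf : ∀ a, |f a| ≤ 1) {n : ℕ} {A D C : List α} {x y : α}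
    (hx : f x = 0) (hy : f y = 0) (hsum : ((A ++ x :: (D ++ y :: C)).map f).sum = 0)
    (hlen : (A ++ x :: (D ++ y :: C)).length ≤ 2 * n + 3) :
    |(D.map f).sum| ≤ n := by
  simp only [List.map_append, List.map_cons, List.sum_append, List.sum_cons, hx, hy,
    zero_add] at hsum
  simp only [List.length_append, List.length_cons] at hlen
  have hAC : |(D.map f).sum| ≤ |(A.map f).sum| + |(C.map f).sum| := by
    rw [show (D.map f).sum = -((A.map f).sum + (C.map f).sum) by linarith, abs_neg]
    exact abs_add_le _ _
  have := abs_sum_map_le_length hf A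
  have := abs_sum_map_le_length hf D
  have := abs_sum_map_le_length hf C
  have : 2 * |(D.map f).sum| ≤ 2 * n + 1 := by linarith
  omega

lemma abs_sum_map_sub_le_of_eq_append_cons (hf : ∀ a, |f a| ≤ 1) {n : ℕ}
    {L A B A' B' : List α} {x y : α} (hx : f x = 0) (hy : f y = 0) (hsum : (L.map f).sum = 0)
    (hlen : L.length ≤ 2 * n + 3) (h : L = A ++ x :: B) (h' : L = A' ++ y :: B') :
    |(A'.map f).sum - (A.map f).sum| ≤ n := by
  obtain ⟨_ | ⟨z, D⟩, rfl, hB⟩ | ⟨_ | ⟨z, D⟩, rfl, hB⟩ :=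
    List.append_eq_append_iff.1 (h.symm.trans h')
  · simp
  · obtain ⟨rfl, rfl⟩ := List.cons.inj hB
    subst h
    simpa [hx] using abs_sum_map_between_le hf hx hy hsum hlen
  · simp
  · obtain ⟨rfl, rfl⟩ := List.cons.inj hB
    subst h'
    simpa [hy, abs_sub_comm] using abs_sum_map_between_le hf hy hx hsum hlen

lemma exists_heights_mem_Icc (hf : ∀ a, |f a| ≤ 1) {n : ℕ} {L : List α}
    (hsum : (L.map f).sum = 0) (hlen : L.length ≤ 2 * n + 3) :
    ∃ c : ℤ, ∀ A x B, L = A ++ x :: B → f x = 0 →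
      c + (A.map f).sum ∈ Set.Icc (0 : ℤ) n := by
  by_cases hne : ∃ A x B, L = A ++ x :: B ∧ f x = 0
  · have hbdd : ∃ b : ℤ, ∀ z,
        (∃ A x B, L = A ++ x :: B ∧ f x = 0 ∧ (A.map f).sum = z) → b ≤ z := by
      refine ⟨-L.length, ?_⟩
      rintro _ ⟨A, x, B, rfl, -, rfl⟩
      have := abs_sum_map_le_length hf A
      simp only [List.length_append, List.length_cons]
      push_cast
      linarith [neg_abs_le (A.map f).sum]
    obtain ⟨A, x, B, hL, hx⟩ := hne
    obtain ⟨_, ⟨A₀, x₀, B₀, hL₀, hx₀, rfl⟩, hmin⟩ :=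
      Int.exists_least_of_bdd hbdd ⟨_, A, x, B, hL, hx, rfl⟩
    refine ⟨-(A₀.map f).sum, fun A x B hL hx => ⟨?_, ?_⟩⟩
    · linarith [hmin _ ⟨A, x, B, hL, hx, rfl⟩]
    · linarith [(abs_le.1 (abs_sum_map_sub_le_of_eq_append_cons hf hx₀ hx hsum hlen hL₀ hL)).2]
  · push Not at hne
    exact ⟨0, fun A x B hL hx => absurd hx (hne A x B hL)⟩

end Heights

lemma zpow_mul_prod_mul_zpow_mem {α H : Type*} [Group H] (T : H) (Q : Subgroup H) (g : α → H)
    (f : α → ℤ) (L : List α) (c : ℤ)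
    (hL : ∀ A x B, L = A ++ x :: B →
      T ^ (c + (A.map f).sum) * g x * T ^ (-(c + (A.map f).sum + f x)) ∈ Q) :
    T ^ c * (L.map g).prod * T ^ (-(c + (L.map f).sum)) ∈ Q := by
  induction L generalizing c with
  | nil => simp
  | cons x L ih =>
    have hx := hL [] x L rfl
    have hrest := ih (c + f x) fun A y B h => by
      simpa [add_assoc] using hL (x :: A) y B (by rw [h]; rfl)
    convert Q.mul_mem hx hrest using 1
    simp only [List.map_cons, List.map_nil, List.prod_cons, List.sum_cons, List.sum_nil,
      ← add_assoc]
    group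

section Letters

variable {ι : Type*}

def tExp : (ι ⊕ Unit) × Bool → ℤ
  | (.inl _, _) => 0
  | (.inr _, b) => cond b 1 (-1)

lemma abs_tExp_le_one (x : (ι ⊕ Unit) × Bool) : |tExp x| ≤ 1 := by
  rcases x with ⟨_ | _, _ | _⟩ <;> simp [tExp]

def tExpHom : FreeGroup (ι ⊕ Unit) →* Multiplicative ℤ :=
  FreeGroup.lift (Sum.elim 1 fun _ => .ofAdd 1)

lemma toAdd_tExpHom_mk (L : List ((ι ⊕ Unit) × Bool)) :
    (tExpHom (FreeGroup.mk L)).toAdd = (L.map tExp).sum := by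
  rw [tExpHom, FreeGroup.lift_mk]
  induction L with
  | nil => rfl
  | cons x L ih =>
    rw [List.map_cons, List.prod_cons, toAdd_mul, ih, List.map_cons, List.sum_cons]
    rcases x with ⟨_ | _, _ | _⟩ <;> simp [tExp]

end Letters

section HNN

variable {G : Type*} [Group G] {K A B : Subgroup G} {t : G}
  {φ : A.subgroupOf K ≃* B.subgroupOf K}

def HNNExtension.liftConj (hφ : ∀ a, ((φ a : K) : G) = t * a * t⁻¹) :
    HNNExtension K _ _ φ →* G :=
  HNNExtension.lift K.subtype t fun a => by simp [hφ]

variable (hφ : ∀ a, ((φ a : K) : G) = t * a * t⁻¹)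

@[simp]
lemma HNNExtension.liftConj_of (x : K) : liftConj hφ (of x) = x := lift_of ..

@[simp]
lemma HNNExtension.liftConj_t : liftConj hφ HNNExtension.t = t := lift_t ..

include hφ in
lemma HNNExtension.t_pow_mul_of_mul_t_pow_mem_range (x : K) (k : ℕ)
    (hA : ∀ j < k, t ^ j * x * (t ^ j)⁻¹ ∈ A) :
    (HNNExtension.t ^ k * of x * (HNNExtension.t ^ k)⁻¹ : HNNExtension K _ _ φ) ∈
      (of : K →* _).range := by
  induction k with
  | zero => exact ⟨x, by simp⟩
  | succ k ih =>
    obtain ⟨y, hy⟩ := ih fun j hj => hA j (by omega)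
    have hyA : (y : G) ∈ A := by
      have hval := congrArg (liftConj hφ) hy
      simp only [liftConj_of, map_mul, map_inv, map_pow, liftConj_t] at hval
      exact hval ▸ hA k (by omega)
    refine ⟨φ ⟨y, hyA⟩, ?_⟩
    rw [equiv_eq_conj, hy]
    group

lemma HNNExtension.eq_one_of_liftConj_eq_one_of_conj_mem_range {z : HNNExtension K _ _ φ}
    (hz : liftConj hφ z = 1) (g : HNNExtension K _ _ φ)
    (hconj : g * z * g⁻¹ ∈ (of : K →* _).range) : z = 1 := by
  obtain ⟨y, hy⟩ := hconj
  have : y = 1 := Subtype.ext (by simpa [hz] using congrArg (liftConj hφ) hy)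
  rw [this, map_one] at hy
  simpa using hy.symm

variable {ι : Type*} (mK : ι → K) {n : ℕ}
  (hA : ∀ i, ∀ j < n, t ^ j * (mK i : G) * (t ^ j)⁻¹ ∈ A)
include hφ hA

lemma HNNExtension.zpow_mul_letter_mul_zpow_mem_range (x : (ι ⊕ Unit) × Bool) (h : ℤ)
    (hh : tExp x = 0 → h ∈ Set.Icc (0 : ℤ) n) :
    HNNExtension.t ^ h * cond x.2 (Sum.elim (fun i => of (mK i)) (fun _ => HNNExtension.t) x.1)
      (Sum.elim (fun i => of (mK i)) (fun _ => HNNExtension.t) x.1)⁻¹ *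
      HNNExtension.t ^ (-(h + tExp x)) ∈ (of : K →* HNNExtension K _ _ φ).range := by
  have hconj (i : ι) (hh : h ∈ Set.Icc (0 : ℤ) n) :
      HNNExtension.t ^ h * of (mK i) * HNNExtension.t ^ (-h) ∈
        (of : K →* HNNExtension K _ _ φ).range := by
    lift h to ℕ using hh.1
    simpa [zpow_neg] using t_pow_mul_of_mul_t_pow_mem_range hφ _ h
      fun j hj => hA i j (by have := hh.2; omega)
  rcases x with ⟨i | _, _ | _⟩
  · simpa [tExp, ← mul_assoc] using inv_mem (hconj i (hh rfl))
  · simpa [tExp] using hconj i (hh rfl)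
  · simp [tExp, zpow_add, zpow_neg]
  · simp [tExp, zpow_add, zpow_neg]

lemma HNNExtension.exists_conj_lift_mem_range [DecidableEq ι] (w : FreeGroup (ι ⊕ Unit))
    (hw : tExpHom w = 1) (hlen : wordLen w ≤ 2 * n + 3) :
    ∃ g, g * FreeGroup.lift (Sum.elim (fun i => of (mK i)) fun _ => HNNExtension.t) w * g⁻¹ ∈
      (of : K →* HNNExtension K _ _ φ).range := by
  rw [← FreeGroup.mk_toWord (x := w)] at hw ⊢
  have hsum : (w.toWord.map tExp).sum = 0 := by
    rw [← toAdd_tExpHom_mk, hw, toAdd_one]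
  obtain ⟨c, hc⟩ := exists_heights_mem_Icc abs_tExp_le_one hsum hlen
  refine ⟨HNNExtension.t ^ c, ?_⟩
  simpa [hsum, FreeGroup.lift_mk, zpow_neg] using zpow_mul_prod_mul_zpow_mem _ _ _ tExp _ c
    fun A x B hL => zpow_mul_letter_mul_zpow_mem_range hφ mK hA x _ (hc A x B hL)

end HNN

theorem relations_ball_in_HNN_kernel_general {G : Type*} [Group G]
    (M : Subgroup G) (t : G) (ℓ : ℕ) (m : Fin ℓ → G) (hmM : ∀ i, m i ∈ M)
    -- `G = M ⋊ ℤ` with the `ℤ` factor generated by `t`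
    (π : G →* Multiplicative ℤ) (hπker : π.ker = M)
    (hπt : π t = Multiplicative.ofAdd 1)
    -- the subgroups `M_{[u,v]}` generated by `⋃_{u ≤ k ≤ v} t^k S t^{-k}`
    (Msub : ℤ → ℤ → Subgroup G)
    (hMsub : ∀ u v : ℤ, Msub u v =
      Subgroup.closure {x | ∃ (i : Fin ℓ) (k : ℤ), u ≤ k ∧ k ≤ v ∧
        x = t ^ k * m i * t ^ (-k)})
    (n : ℕ)
    (hmem : ∀ i, m i ∈ Msub 0 (n : ℤ))
    -- the conjugation-by-`t` isomorphism `M_{[0,n-1]} → M_{[1,n]}`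
    (φn : (Msub 0 ((n : ℤ) - 1)).subgroupOf (Msub 0 (n : ℤ)) ≃*
      (Msub 1 (n : ℤ)).subgroupOf (Msub 0 (n : ℤ)))
    (hφn : ∀ x, ((φn x : (Msub 0 (n : ℤ))) : G) = t * ((x : (Msub 0 (n : ℤ))) : G) * t⁻¹)
    -- the natural maps from the free group on `m_1, …, m_ℓ, t` to `G` and to `G_n`
    (πG : FreeGroup (Fin ℓ ⊕ Unit) →* G)
    (hπG : πG = FreeGroup.lift (Sum.elim m (fun _ => t)))
    (ψ : FreeGroup (Fin ℓ ⊕ Unit) →*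
      HNNExtension (Msub 0 (n : ℤ)) _ _ φn)
    (hψ : ψ = FreeGroup.lift (Sum.elim
      (fun i => HNNExtension.of ⟨m i, hmem i⟩) (fun _ => HNNExtension.t))) :
    Subgroup.normalClosure {w | w ∈ πG.ker ∧ wordLen w ≤ 2 * n + 3} ≤ ψ.ker := by
  have hA (i : Fin ℓ) (j : ℕ) (hj : j < n) :
      t ^ j * m i * (t ^ j)⁻¹ ∈ Msub 0 ((n : ℤ) - 1) :=
    hMsub _ _ ▸ Subgroup.subset_closure ⟨i, j, by positivity, by omega, by simp [zpow_neg]⟩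
  have hΦψ : (HNNExtension.liftConj hφn).comp ψ = πG := by
    ext i
    cases i <;> simp [hψ, hπG]
  have hπχ : π.comp πG = tExpHom := by
    ext i
    cases i with
    | inl i => simpa [tExpHom, hπG] using (show m i ∈ π.ker from hπker ▸ hmM i)
    | inr => simp [tExpHom, hπG, hπt]
  refine Subgroup.normalClosure_le_normal fun w ⟨hw, hlen⟩ => ?_
  have hχw : tExpHom w = 1 := by rw [← hπχ, MonoidHom.comp_apply, hw, map_one]
  obtain ⟨g, hg⟩ := HNNExtension.exists_conj_lift_mem_range hφn (fun i => ⟨m i, hmem i⟩)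
    hA w hχw hlen
  exact HNNExtension.eq_one_of_liftConj_eq_one_of_conj_mem_range hφn
    (by rw [← MonoidHom.comp_apply, hΦψ, hw]) g (hψ ▸ hg)

theorem relations_ball_in_HNN_kernel {G : Type*} [Group G]
    (M : Subgroup G) (t : G) (ℓ : ℕ) (m : Fin ℓ → G) (hmM : ∀ i, m i ∈ M)
    -- `G = M ⋊ ℤ` with the `ℤ` factor generated by `t`
    (π : G →* Multiplicative ℤ) (hπker : π.ker = M)
    (hπt : π t = Multiplicative.ofAdd 1)
    -- `S ∪ {t}` generates `G`
    (hgen : Subgroup.closure (Set.range m ∪ {t}) = ⊤)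
    -- the subgroups `M_{[u,v]}` generated by `⋃_{u ≤ k ≤ v} t^k S t^{-k}`
    (Msub : ℤ → ℤ → Subgroup G)
    (hMsub : ∀ u v : ℤ, Msub u v =
      Subgroup.closure {x | ∃ (i : Fin ℓ) (k : ℤ), u ≤ k ∧ k ≤ v ∧
        x = t ^ k * m i * t ^ (-k)})
    (n : ℕ)
    (hmem : ∀ i, m i ∈ Msub 0 (n : ℤ))
    -- the conjugation-by-`t` isomorphism `M_{[0,n-1]} → M_{[1,n]}`
    (φn : (Msub 0 ((n : ℤ) - 1)).subgroupOf (Msub 0 (n : ℤ)) ≃*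
      (Msub 1 (n : ℤ)).subgroupOf (Msub 0 (n : ℤ)))
    (hφn : ∀ x, ((φn x : (Msub 0 (n : ℤ))) : G) = t * ((x : (Msub 0 (n : ℤ))) : G) * t⁻¹)
    -- the natural maps from the free group on `m_1, …, m_ℓ, t` to `G` and to `G_n`
    (πG : FreeGroup (Fin ℓ ⊕ Unit) →* G)
    (hπG : πG = FreeGroup.lift (Sum.elim m (fun _ => t)))
    (ψ : FreeGroup (Fin ℓ ⊕ Unit) →*
      HNNExtension (Msub 0 (n : ℤ)) _ _ φn)
    (hψ : ψ = FreeGroup.lift (Sum.elim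
      (fun i => HNNExtension.of ⟨m i, hmem i⟩) (fun _ => HNNExtension.t))) :
    Subgroup.normalClosure {w | w ∈ πG.ker ∧ wordLen w ≤ 2 * n + 3} ≤ ψ.ker :=
  relations_ball_in_HNN_kernel_general M t ℓ m hmM π hπker hπt Msub hMsub n hmem φn hφn πG hπG ψ hψ
end

section
/- Let 1 → Z → G → Q → 1 be a short exact sequence with Z central in G and G finitely presented. If Q is finitely presented, then Z is finitely generated. -/
/-- A group is finitely presented if it is the quotient of a finitely generated free group
by the normal closure of finitely many relators. -/
def FinitelyPresentedGroup (G : Type*) [Group G] : Prop :=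
  ∃ (n : ℕ) (f : FreeGroup (Fin n) →* G) (R : Set (FreeGroup (Fin n))),
    Function.Surjective f ∧ R.Finite ∧ f.ker = Subgroup.normalClosure R

theorem central_subgroup_fg_of_fp {G : Type*} [Group G]
    (Z : Subgroup G) (hZ : Z ≤ Subgroup.center G)
    [hZn : Z.Normal] (hG : FinitelyPresentedGroup G)
    (hQ : FinitelyPresentedGroup (G ⧸ Z)) :
    Z.FG := by
  obtain ⟨n, f, R, hfsurj, -, -⟩ := hG
  obtain ⟨m, g, S, hgsurj, hSfin, hgker⟩ := hQ
  -- the composite surjection F_n → Q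
  set f1 : FreeGroup (Fin n) →* G ⧸ Z := (QuotientGroup.mk' Z).comp f with hf1
  have hf1surj : Function.Surjective f1 :=
    (QuotientGroup.mk'_surjective Z).comp hfsurj
  -- lift φ : F_n → F_m with g ∘ φ = f1
  have hφ0 : ∀ i : Fin n, ∃ w : FreeGroup (Fin m), g w = f1 (FreeGroup.of i) :=
    fun i => hgsurj _
  set φ : FreeGroup (Fin n) →* FreeGroup (Fin m) :=
    FreeGroup.lift (fun i => Classical.choose (hφ0 i)) with hφdef
  have hgφ : g.comp φ = f1 := by
    apply FreeGroup.ext_hom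
    intro i
    simp only [hφdef, MonoidHom.comp_apply, FreeGroup.lift_apply_of]
    exact Classical.choose_spec (hφ0 i)
  -- lift ψ : F_m → F_n with f1 ∘ ψ = g
  have hψ0 : ∀ j : Fin m, ∃ w : FreeGroup (Fin n), f1 w = g (FreeGroup.of j) :=
    fun j => hf1surj _
  set ψ : FreeGroup (Fin m) →* FreeGroup (Fin n) :=
    FreeGroup.lift (fun j => Classical.choose (hψ0 j)) with hψdef
  have hf1ψ : f1.comp ψ = g := by
    apply FreeGroup.ext_hom
    intro j
    simp only [hψdef, MonoidHom.comp_apply, FreeGroup.lift_apply_of]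
    exact Classical.choose_spec (hψ0 j)
  -- the finite set of normal generators of ker f1
  set T : Set (FreeGroup (Fin n)) :=
    (Set.range fun i : Fin n => FreeGroup.of i * (ψ (φ (FreeGroup.of i)))⁻¹) ∪ ψ '' S
    with hTdef
  have hTfin : T.Finite := (Set.finite_range _).union (hSfin.image ψ)
  -- ker f1 = normal closure of T
  have hker : f1.ker = Subgroup.normalClosure T := by
    apply le_antisymm
    · -- ≤ : use that mk ∘ (ψ ∘ φ) = mk on the quotient
      intro w hw
      have hmk : (QuotientGroup.mk' (Subgroup.normalClosure T)).comp (ψ.comp φ)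
          = QuotientGroup.mk' (Subgroup.normalClosure T) := by
        apply FreeGroup.ext_hom
        intro i
        simp only [MonoidHom.comp_apply]
        rw [QuotientGroup.mk'_eq_mk', ]
        refine ⟨(ψ (φ (FreeGroup.of i)))⁻¹ * (FreeGroup.of i * (ψ (φ (FreeGroup.of i)))⁻¹)
            * ((ψ (φ (FreeGroup.of i)))⁻¹)⁻¹, ?_, by group⟩
        exact Subgroup.normalClosure_normal.conj_mem _
          (Subgroup.subset_normalClosure (Set.mem_union_left _ (Set.mem_range_self i))) _
      -- φ w ∈ ker g
      have hφw : φ w ∈ g.ker := by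
        rw [MonoidHom.mem_ker, ← MonoidHom.comp_apply, hgφ]
        exact hw
      rw [hgker] at hφw
      -- ψ (φ w) ∈ normal closure of T
      have hψφw : ψ (φ w) ∈ Subgroup.normalClosure T := by
        have : ψ (φ w) ∈ Subgroup.map ψ (Subgroup.normalClosure S) :=
          ⟨φ w, hφw, rfl⟩
        have hle : Subgroup.map ψ (Subgroup.normalClosure S)
            ≤ Subgroup.normalClosure T := by
          rw [Subgroup.map_le_iff_le_comap]
          apply Subgroup.normalClosure_le_normal
          intro s hs
          exact Subgroup.subset_normalClosure (Set.mem_union_right _ ⟨s, hs, rfl⟩)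
        exact hle this
      -- conclude
      have h1 : QuotientGroup.mk' (Subgroup.normalClosure T) w
          = QuotientGroup.mk' (Subgroup.normalClosure T) (ψ (φ w)) := by
        conv_lhs => rw [← hmk]
        rfl
      have h2 : QuotientGroup.mk' (Subgroup.normalClosure T) w = 1 := by
        rw [h1]
        exact (QuotientGroup.eq_one_iff _).2 hψφw
      exact (QuotientGroup.eq_one_iff _).1 h2
    · apply Subgroup.normalClosure_le_normal
      intro x hx
      rcases hx with ⟨i, rfl⟩ | ⟨s, hs, rfl⟩
      · have : f1 (ψ (φ (FreeGroup.of i))) = f1 (FreeGroup.of i) := by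
          rw [← MonoidHom.comp_apply, hf1ψ, ← MonoidHom.comp_apply, hgφ]
        simp [MonoidHom.mem_ker, this]
      · have : ψ s ∈ f1.ker := by
          rw [MonoidHom.mem_ker, ← MonoidHom.comp_apply, hf1ψ, ← MonoidHom.mem_ker, hgker]
          exact Subgroup.subset_normalClosure hs
        exact this
  -- Z = image of ker f1 under f
  have hcomap : f1.ker = Subgroup.comap f Z := by
    ext w
    simp [hf1, MonoidHom.mem_ker, QuotientGroup.eq_one_iff]
  have hZeq : Z = Subgroup.map f (Subgroup.normalClosure T) := by
    rw [← hker, hcomap, Subgroup.map_comap_eq_self_of_surjective hfsurj]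
  -- image of normal closure is normal closure of image
  rw [Subgroup.map_normalClosure T f hfsurj] at hZeq
  -- since f '' T ⊆ Z ≤ center, the normal closure equals the closure
  have hsub : f '' T ⊆ Subgroup.center G := by
    intro x hx
    apply hZ
    rcases hx with ⟨t, ht, rfl⟩
    have : t ∈ f1.ker := by rw [hker]; exact Subgroup.subset_normalClosure ht
    rw [hcomap] at this
    exact this
  have hnorm : (Subgroup.closure (f '' T)).Normal := by
    have hle : Subgroup.closure (f '' T) ≤ Subgroup.center G :=
      (Subgroup.closure_le _).2 hsub
    constructor
    intro a ha b
    have := Subgroup.mem_center_iff.1 (hle ha) b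
    rwa [show b * a * b⁻¹ = a * b * b⁻¹ * 1 by rw [this]; group, mul_one,
      mul_inv_cancel_right]
  have hncl : Subgroup.normalClosure (f '' T) = Subgroup.closure (f '' T) :=
    le_antisymm (Subgroup.normalClosure_le_normal Subgroup.subset_closure)
      Subgroup.closure_le_normalClosure
  rw [hncl] at hZeq
  rw [Subgroup.fg_iff]
  exact ⟨f '' T, hZeq.symm, hTfin.image f⟩
end

section
/- If ℓ₁ and ℓ₂ are bi-Lipschitz equivalent length functions on a group G (i.e., there is C ≥ 1 with C⁻¹ ℓ₁(g) ≤ ℓ₂(g) ≤ C ℓ₁(g) for all g), then X_{ℓ₁}(G) ~ X_{ℓ₂}(G), where X_ℓ(G) is the set of real numbers n such that some element g with ℓ(g) = n is not in the subgroup of G generated by elements of ℓ-length strictly less than n, and ~ is the finite multiplicative Hausdorff distance relation. -/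
/-- `X_ℓ(G)`: the set of `n` such that some element of length `n` is not in the subgroup
generated by the elements of length strictly less than `n`. -/
def lenRange {G : Type*} [Group G] (l : G → ℕ) : Set ℕ :=
  {n | ∃ g : G, l g = n ∧ g ∉ Subgroup.closure {h : G | l h < n}}

def MulPrec (A B : Set ℕ) : Prop :=
  ∃ c : ℝ, 0 < c ∧ ∀ a ∈ A, ∃ b ∈ B, c⁻¹ * (a : ℝ) ≤ (b : ℝ) ∧ (b : ℝ) ≤ c * (a : ℝ)

def MulSim (A B : Set ℕ) : Prop := MulPrec A B ∧ MulPrec B A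

lemma lenRange_key {G : Type*} [Group G] (l₁ l₂ : G → ℕ) (C : ℝ) (hCpos : 0 < C)
    (h1 : ∀ g, C⁻¹ * (l₁ g : ℝ) ≤ (l₂ g : ℝ)) (h2 : ∀ g, (l₂ g : ℝ) ≤ C * (l₁ g : ℝ)) :
    MulPrec (lenRange l₁) (lenRange l₂) := by
  classical
  refine ⟨C, hCpos, ?_⟩
  rintro n ⟨g, hg, hgH⟩
  set H₁ : Subgroup G := Subgroup.closure {h : G | l₁ h < n} with hH₁
  have hex : ∃ m : ℕ, ∃ h : G, l₂ h = m ∧ h ∉ H₁ := ⟨l₂ g, g, rfl, hgH⟩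
  set m := Nat.find hex with hm
  obtain ⟨h, hhm, hhH⟩ := Nat.find_spec hex
  have hsub : Subgroup.closure {k : G | l₂ k < m} ≤ H₁ := by
    rw [Subgroup.closure_le]
    intro k hk
    by_contra hkH
    exact Nat.find_min hex hk ⟨k, rfl, hkH⟩
  refine ⟨m, ⟨h, hhm, fun hmem => hhH (hsub hmem)⟩, ?_, ?_⟩
  · -- lower bound: l₁ h ≥ n since h ∉ H₁
    have hln : n ≤ l₁ h := by
      by_contra hlt
      exact hhH (Subgroup.subset_closure (by simpa using Nat.lt_of_not_le hlt))
    have := h1 h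
    rw [hhm] at this
    calc C⁻¹ * (n : ℝ) ≤ C⁻¹ * (l₁ h : ℝ) := by
          apply mul_le_mul_of_nonneg_left (by exact_mod_cast hln) (by positivity)
      _ ≤ (m : ℝ) := this
  · -- upper bound: m ≤ l₂ g ≤ C * l₁ g = C * n
    have hmle : m ≤ l₂ g := Nat.find_min' hex ⟨g, rfl, hgH⟩
    have := h2 g
    rw [hg] at this
    calc (m : ℝ) ≤ (l₂ g : ℝ) := by exact_mod_cast hmle
      _ ≤ C * (n : ℝ) := this

theorem lenRange_bilipschitz_invariant {G : Type*} [Group G] (l₁ l₂ : G → ℕ)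
    (C : ℝ) (hC : 1 ≤ C)
    (hbl : ∀ g : G, C⁻¹ * (l₁ g : ℝ) ≤ (l₂ g : ℝ) ∧ (l₂ g : ℝ) ≤ C * (l₁ g : ℝ)) :
    MulSim (lenRange l₁) (lenRange l₂) := by
  have hCpos : 0 < C := lt_of_lt_of_le one_pos hC
  constructor
  · exact lenRange_key l₁ l₂ C hCpos (fun g => (hbl g).1) (fun g => (hbl g).2)
  · refine lenRange_key l₂ l₁ C hCpos (fun g => ?_) (fun g => ?_)
    · have := (hbl g).2
      rw [inv_mul_le_iff₀ hCpos]
      linarith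
    · have := (hbl g).1
      rw [inv_mul_le_iff₀ hCpos] at this
      linarith
end
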